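/- (Hierarchical peer-to-peer, graph level.) Let P1 and P2 be disjoint sets of vertices with c1 ∈ P1 and c2 ∈ P2, and let S = S(P1, P2, c1, c2) be the binary star graph. Let G' = S − (P2 \ {c2}) be obtained by deleting all vertices of P2 other than c2. Then τ_{c2}(G') − c2 is the complete graph on P1. -/

import Mathlib

open SimpleGraph

universe u

/-- Local complementation of `G` at vertex `i`: adjacency is toggled exactly among
pairs of neighbors of `i`. -/
def localComp {V : Type u} (G : SimpleGraph V) (i : V) : SimpleGraph V where
  Adj a b := a ≠ b ∧
    ((G.Adj i a ∧ G.Adj i b) ∧ ¬ G.Adj a b ∨ ¬(G.Adj i a ∧ G.Adj i b) ∧ G.Adj a b)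
  symm := ⟨by
    rintro a b ⟨hne, h⟩
    refine ⟨hne.symm, ?_⟩
    rcases h with ⟨⟨ha, hb⟩, hab⟩ | ⟨h1, h2⟩
    · exact Or.inl ⟨⟨hb, ha⟩, fun h => hab h.symm⟩
    · exact Or.inr ⟨fun h => h1 ⟨h.2, h.1⟩, h2.symm⟩⟩
  loopless := ⟨fun a h => h.1 rfl⟩

/-- Vertex deletion `G − i`: remove every edge incident to `i` (the vertex stays,
isolated). -/
def delVert {V : Type u} (G : SimpleGraph V) (i : V) : SimpleGraph V where
  Adj a b := G.Adj a b ∧ a ≠ i ∧ b ≠ i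
  symm := ⟨fun _ _ ⟨h, ha, hb⟩ => ⟨h.symm, hb, ha⟩⟩
  loopless := ⟨fun a h => G.irrefl h.1⟩

/-- Deletion of a set `Z` of vertices: remove every edge incident to a vertex of `Z`. -/
def delSet {V : Type u} (G : SimpleGraph V) (Z : Set V) : SimpleGraph V where
  Adj a b := G.Adj a b ∧ a ∉ Z ∧ b ∉ Z
  symm := ⟨fun _ _ ⟨h, ha, hb⟩ => ⟨h.symm, hb, ha⟩⟩
  loopless := ⟨fun a h => G.irrefl h.1⟩

/-- Star graph on the set `W` with center `c`: edges are exactly the pairs `{c, u}`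
for `u ∈ W \ {c}`. -/
def starGraph {V : Type u} (W : Set V) (c : V) : SimpleGraph V :=
  SimpleGraph.fromRel (fun a b => a = c ∧ b ∈ W \ {c})

/-- Complete graph on the set `A`: edges are exactly all pairs of distinct elements
of `A`. -/
def completeOn {V : Type u} (A : Set V) : SimpleGraph V :=
  SimpleGraph.fromRel (fun a b => a ∈ A ∧ b ∈ A)

/-- Complete bipartite graph on parts `A` and `B`: edges are exactly the pairs
`{a, b}` with `a ∈ A` and `b ∈ B`. -/
def completeBipartiteOn {V : Type u} (A B : Set V) : SimpleGraph V :=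
  SimpleGraph.fromRel (fun a b => a ∈ A ∧ b ∈ B)

/-- Binary star graph `S(P1, P2, c1, c2)`: edges are exactly the pairs `{c1, u}`
with `u ∈ P2` together with the pairs `{u, c2}` with `u ∈ P1`. -/
def binaryStar {V : Type u} (P1 P2 : Set V) (c1 c2 : V) : SimpleGraph V :=
  SimpleGraph.fromRel (fun a b => (a = c1 ∧ b ∈ P2) ∨ (a ∈ P1 ∧ b = c2))

/-- The graph with the single edge `{c1, c2}`. -/
def singleEdge {V : Type u} (c1 c2 : V) : SimpleGraph V :=
  SimpleGraph.fromRel (fun a b => a = c1 ∧ b = c2)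

/-!
Once the vertices of `P2` other than `c2` are deleted, the binary star is just the star with
centre `c2` and leaves `P1`. Local complementation at the centre of a star turns its set of
leaves into a clique and keeps the spokes, and deleting the centre then leaves the clique.
-/

section StarGraph

variable {V : Type u}

theorem delSet_binaryStar_diff_singleton {P1 P2 : Set V} (hdisj : Disjoint P1 P2)
    {c1 : V} (c2 : V) (hc1 : c1 ∈ P1) :
    delSet (binaryStar P1 P2 c1 c2) (P2 \ {c2}) = starGraph P1 c2 := by
  ext a b
  simp only [delSet, binaryStar, _root_.starGraph, fromRel_adj, Set.mem_sdiff,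
    Set.mem_singleton_iff]
  constructor
  · rintro ⟨⟨hne, h⟩, ha, hb⟩
    refine ⟨hne, ?_⟩
    rcases h with (⟨rfl, hb2⟩ | ⟨ha1, rfl⟩) | (⟨rfl, ha2⟩ | ⟨hb1, rfl⟩)
    · obtain rfl : b = c2 := by_contra fun hb' => hb ⟨hb2, hb'⟩
      exact Or.inr ⟨rfl, hc1, hne⟩
    · exact Or.inr ⟨rfl, ha1, hne⟩
    · obtain rfl : a = c2 := by_contra fun ha' => ha ⟨ha2, ha'⟩
      exact Or.inl ⟨rfl, hc1, hne.symm⟩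
    · exact Or.inl ⟨rfl, hb1, hne.symm⟩
  · rintro ⟨hne, ⟨rfl, hb1, -⟩ | ⟨rfl, ha1, -⟩⟩
    · exact ⟨⟨hne, Or.inr (Or.inr ⟨hb1, rfl⟩)⟩, fun h => h.2 rfl,
        fun h => hdisj.notMem_of_mem_left hb1 h.1⟩
    · exact ⟨⟨hne, Or.inl (Or.inr ⟨ha1, rfl⟩)⟩, fun h => hdisj.notMem_of_mem_left ha1 h.1,
        fun h => h.2 rfl⟩

theorem starGraph_adj_self_left {W : Set V} {c a : V} :
    (starGraph W c).Adj c a ↔ a ∈ W ∧ a ≠ c := by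
  simp only [_root_.starGraph, fromRel_adj, Set.mem_sdiff, Set.mem_singleton_iff]
  constructor
  · rintro ⟨hne, ⟨-, h⟩ | ⟨rfl, -⟩⟩
    exacts [h, absurd rfl hne]
  · exact fun h => ⟨h.2.symm, Or.inl ⟨trivial, h⟩⟩

theorem eq_or_eq_of_starGraph_adj {W : Set V} {c a b : V} (h : (starGraph W c).Adj a b) :
    a = c ∨ b = c := by
  simp only [_root_.starGraph, fromRel_adj] at h
  tauto

theorem localComp_starGraph_self (W : Set V) (c : V) :
    localComp (starGraph W c) c = starGraph W c ⊔ completeOn (W \ {c}) := by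
  ext a b
  simp only [localComp, sup_adj, completeOn, fromRel_adj, starGraph_adj_self_left,
    Set.mem_sdiff, Set.mem_singleton_iff]
  constructor
  · rintro ⟨hne, ⟨hab, -⟩ | ⟨-, hab⟩⟩
    exacts [Or.inr ⟨hne, Or.inl hab⟩, Or.inl hab]
  · rintro (hab | ⟨hne, hab⟩)
    · refine ⟨hab.ne, Or.inr ⟨?_, hab⟩⟩
      rcases eq_or_eq_of_starGraph_adj hab with rfl | rfl
      exacts [fun h => h.1.2 rfl, fun h => h.2.2 rfl]
    · have hab : (a ∈ W ∧ a ≠ c) ∧ b ∈ W ∧ b ≠ c := by tauto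
      exact ⟨hne, Or.inl ⟨hab, fun h =>
        (eq_or_eq_of_starGraph_adj h).elim hab.1.2 hab.2.2⟩⟩

theorem delVert_sup (G H : SimpleGraph V) (i : V) :
    delVert (G ⊔ H) i = delVert G i ⊔ delVert H i := by
  ext a b
  simp only [delVert, sup_adj]
  tauto

theorem delVert_starGraph_self (W : Set V) (c : V) : delVert (starGraph W c) c = ⊥ := by
  ext a b
  simp only [delVert, bot_adj, iff_false, not_and]
  exact fun h ha hb => (eq_or_eq_of_starGraph_adj h).elim ha hb

theorem delVert_completeOn_of_notMem {A : Set V} {i : V} (hi : i ∉ A) :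
    delVert (completeOn A) i = completeOn A := by
  ext a b
  simp only [delVert, completeOn, fromRel_adj, and_iff_left_iff_imp]
  rintro ⟨-, ⟨ha, hb⟩ | ⟨hb, ha⟩⟩ <;>
    exact ⟨fun h => hi (h ▸ ha), fun h => hi (h ▸ hb)⟩

end StarGraph

/-- Hierarchical peer-to-peer, graph level:
with `G' = S − (P2 \ {c2})`, `τ_{c2}(G') − c2` is the complete graph on `P1`. -/
theorem stmt_6 {V : Type u} (P1 P2 : Set V) (hdisj : Disjoint P1 P2)
    (c1 c2 : V) (hc1 : c1 ∈ P1) (hc2 : c2 ∈ P2) :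
    delVert (localComp (delSet (binaryStar P1 P2 c1 c2) (P2 \ {c2})) c2) c2 =
      completeOn P1 := by
  have hc2P1 : c2 ∉ P1 := hdisj.notMem_of_mem_right hc2
  rw [delSet_binaryStar_diff_singleton hdisj c2 hc1, localComp_starGraph_self, delVert_sup,
    delVert_starGraph_self, bot_sup_eq, Set.sdiff_singleton_eq_self hc2P1,
    delVert_completeOn_of_notMem hc2P1]
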